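/- arXiv:2006.09871 — 5 statements merged into one kernel-verified Lean document; each statement's English description precedes it below -/
import Mathlib

section
/- Let X and Y be Banach spaces and let z ∈ X ⊗π Y have a representation z = ∑ₙ λₙ xₙ ⊗ yₙ with λₙ > 0, xₙ ∈ S_X, yₙ ∈ S_Y and ∑ₙ λₙ < ∞. Then the following are equivalent: (1) ‖z‖π = ∑ₙ λₙ (i.e. z ∈ NAπ(X ⊗π Y)); (2) there is G ∈ L(X, Y*) with ‖G‖ = 1 such that G(xₙ)(yₙ) = 1 for every n; (3) every norm-one G ∈ L(X, Y*) with G(z) = ‖z‖π satisfies G(xₙ)(yₙ) = 1 for every n. -/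
noncomputable section

open scoped BigOperators

/-- The predicate stating that the Banach space `Z`, together with the bounded bilinear map
`t : X → Y → Z` and the correspondence `lift` between operators `X → Y*` and functionals on `Z`,
realizes the projective tensor product `X ⊗π Y`.  The field `norm_eq_sInf` says that the norm of
`Z` is the projective norm: `‖z‖π = inf {∑ₙ ‖xₙ‖‖yₙ‖ : z = ∑ₙ xₙ ⊗ yₙ}`, and the `lift` fields
encode the canonical isometric identification `(X ⊗π Y)* = L(X, Y*)`. -/
structure IsProjTensorProduct (X Y Z : Type*)
    [NormedAddCommGroup X] [NormedSpace ℝ X]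
    [NormedAddCommGroup Y] [NormedSpace ℝ Y]
    [NormedAddCommGroup Z] [NormedSpace ℝ Z]
    (t : X →L[ℝ] Y →L[ℝ] Z)
    (lift : (X →L[ℝ] (Y →L[ℝ] ℝ)) → (Z →L[ℝ] ℝ)) : Prop where
  norm_tmul_le : ∀ (x : X) (y : Y), ‖t x y‖ ≤ ‖x‖ * ‖y‖
  exists_rep : ∀ z : Z, ∃ (x : ℕ → X) (y : ℕ → Y),
    Summable (fun n => ‖x n‖ * ‖y n‖) ∧ HasSum (fun n => t (x n) (y n)) z
  norm_eq_sInf : ∀ z : Z, ‖z‖ = sInf {r : ℝ | ∃ (x : ℕ → X) (y : ℕ → Y),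
    Summable (fun n => ‖x n‖ * ‖y n‖) ∧ HasSum (fun n => t (x n) (y n)) z ∧
    r = ∑' n, ‖x n‖ * ‖y n‖}
  lift_tmul : ∀ (G : X →L[ℝ] (Y →L[ℝ] ℝ)) (x : X) (y : Y), lift G (t x y) = G x y
  norm_lift : ∀ G : X →L[ℝ] (Y →L[ℝ] ℝ), ‖lift G‖ = ‖G‖
  lift_surjective : Function.Surjective lift

/-- An element `z ∈ X ⊗π Y` attains its projective norm if it admits a representation
`z = ∑ₙ xₙ ⊗ yₙ` with `∑ₙ ‖xₙ‖‖yₙ‖ < ∞` and `‖z‖π = ∑ₙ ‖xₙ‖‖yₙ‖`. -/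
def AttainsProjNorm {X Y Z : Type*}
    [NormedAddCommGroup X] [NormedSpace ℝ X]
    [NormedAddCommGroup Y] [NormedSpace ℝ Y]
    [NormedAddCommGroup Z] [NormedSpace ℝ Z]
    (t : X →L[ℝ] Y →L[ℝ] Z) (z : Z) : Prop :=
  ∃ (x : ℕ → X) (y : ℕ → Y),
    Summable (fun n => ‖x n‖ * ‖y n‖) ∧ HasSum (fun n => t (x n) (y n)) z ∧
    ‖z‖ = ∑' n, ‖x n‖ * ‖y n‖

/-- Characterization of norm-attaining tensors: for
`z = ∑ₙ cₙ xₙ ⊗ yₙ` with `cₙ > 0` and unit vectors `xₙ, yₙ`, TFAE: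
(1) `‖z‖π = ∑ₙ cₙ`; (2) there is `G ∈ L(X,Y*)` of norm one with `G(xₙ)(yₙ) = 1` for all n;
(3) every norm-one `G ∈ L(X,Y*)` with `G(z) = ‖z‖π` satisfies `G(xₙ)(yₙ) = 1` for all n. -/
theorem normAttaining_tensor_tfae
    {X Y Z : Type*} [NormedAddCommGroup X] [NormedSpace ℝ X] [CompleteSpace X]
    [NormedAddCommGroup Y] [NormedSpace ℝ Y] [CompleteSpace Y]
    [NormedAddCommGroup Z] [NormedSpace ℝ Z] [CompleteSpace Z]
    (t : X →L[ℝ] Y →L[ℝ] Z) (lift : (X →L[ℝ] (Y →L[ℝ] ℝ)) → (Z →L[ℝ] ℝ))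
    (h : IsProjTensorProduct X Y Z t lift)
    (z : Z) (c : ℕ → ℝ) (x : ℕ → X) (y : ℕ → Y)
    (hc : ∀ n, 0 < c n) (hx : ∀ n, ‖x n‖ = 1) (hy : ∀ n, ‖y n‖ = 1)
    (hsum : Summable c) (hz : HasSum (fun n => c n • t (x n) (y n)) z) :
    List.TFAE
      [ ‖z‖ = ∑' n, c n,
        ∃ G : X →L[ℝ] (Y →L[ℝ] ℝ), ‖G‖ = 1 ∧ ∀ n, G (x n) (y n) = 1,
        ∀ G : X →L[ℝ] (Y →L[ℝ] ℝ), ‖G‖ = 1 → lift G z = ‖z‖ →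
          ∀ n, G (x n) (y n) = 1 ] := by
  have hzsum : ∀ G : X →L[ℝ] (Y →L[ℝ] ℝ),
      HasSum (fun n => c n * G (x n) (y n)) (lift G z) := by
    intro G
    have := hz.mapL (lift G)
    simpa [map_smul, h.lift_tmul, smul_eq_mul] using this
  have hGle : ∀ (G : X →L[ℝ] (Y →L[ℝ] ℝ)), ‖G‖ = 1 → ∀ n, G (x n) (y n) ≤ 1 := by
    intro G hG n
    calc G (x n) (y n) ≤ ‖G (x n) (y n)‖ := le_abs_self _
    _ ≤ ‖G (x n)‖ * ‖y n‖ := (G (x n)).le_opNorm (y n)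
    _ ≤ (‖G‖ * ‖x n‖) * ‖y n‖ :=
        mul_le_mul_of_nonneg_right (G.le_opNorm (x n)) (norm_nonneg _)
    _ = 1 := by rw [hG, hx, hy]; ring
  have hle : ‖z‖ ≤ ∑' n, c n := by
    rw [h.norm_eq_sInf]
    apply csInf_le
    · refine ⟨0, ?_⟩
      rintro r ⟨x', y', hs, -, rfl⟩
      exact tsum_nonneg fun n => mul_nonneg (norm_nonneg _) (norm_nonneg _)
    · refine ⟨fun n => c n • x n, y, ?_, ?_, ?_⟩
      · simpa [norm_smul, hx, hy, abs_of_pos (hc _)] using hsum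
      · have : (fun n => t ((c n) • x n) (y n)) = fun n => c n • t (x n) (y n) := by
          funext n; simp [map_smul]
        rw [this]; exact hz
      · simp [norm_smul, hx, hy, abs_of_pos (hc _)]
  tfae_have 1 → 3
  · intro h1 G hG hGz n
    have hsum2 : HasSum (fun n => c n * G (x n) (y n)) (∑' n, c n) := by
      rw [← h1, ← hGz]; exact hzsum G
    have hsummable : Summable (fun n => c n * G (x n) (y n)) := hsum2.summable
    set f : ℕ → ℝ := fun n => c n - c n * G (x n) (y n) with hf
    have hfs : Summable f := hsum.sub hsummable
    have hftsum : ∑' n, f n = 0 := by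
      rw [hf]
      rw [Summable.tsum_sub hsum hsummable, hsum2.tsum_eq, sub_self]
    have hfnonneg : ∀ m, 0 ≤ f m := by
      intro m
      have := hGle G hG m
      have hcm := (hc m).le
      simp only [hf]
      nlinarith
    have hfn : f n ≤ 0 := by
      rw [← hftsum]
      exact Summable.le_tsum hfs n fun j _ => hfnonneg j
    have : f n = 0 := le_antisymm hfn (hfnonneg n)
    have hcn := (hc n).ne'
    simp only [hf] at this
    have h2 : c n * (1 - G (x n) (y n)) = 0 := by ring_nf; linarith [this]
    have h3 := (mul_eq_zero.mp h2).resolve_left hcn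
    linarith
  tfae_have 3 → 2
  · intro h3
    -- construct a norm-one operator to show Z is nontrivial
    obtain ⟨g, hg1, hgx⟩ := exists_dual_vector ℝ (x 0) (by rw [← norm_pos_iff, hx]; norm_num)
    obtain ⟨f, hf1, hfy⟩ := exists_dual_vector ℝ (y 0) (by rw [← norm_pos_iff, hy]; norm_num)
    have hG1 : ‖g.smulRight f‖ = 1 := by
      rw [ContinuousLinearMap.norm_smulRight_apply, hg1, hf1, one_mul]
    have hntZ : Nontrivial Z := by
      have hl : ‖lift (g.smulRight f)‖ = 1 := by rw [h.norm_lift]; exact hG1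
      have : lift (g.smulRight f) ≠ 0 := by
        intro h0; rw [h0, norm_zero] at hl; norm_num at hl
      obtain ⟨z', hz'⟩ := DFunLike.ne_iff.mp this
      exact nontrivial_of_ne z' 0 (by intro h0; subst h0; simp at hz')
    obtain ⟨φ, hφ1, hφz⟩ := exists_dual_vector' ℝ z
    obtain ⟨G, hGφ⟩ := h.lift_surjective φ
    have hGnorm : ‖G‖ = 1 := by rw [← h.norm_lift, hGφ]; exact hφ1
    refine ⟨G, hGnorm, h3 G hGnorm ?_⟩
    rw [hGφ]
    exact_mod_cast hφz
  tfae_have 2 → 1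
  · rintro ⟨G, hG1, hGxy⟩
    refine le_antisymm hle ?_
    have hlz : lift G z = ∑' n, c n := by
      have := (hzsum G).tsum_eq
      simp only [hGxy, mul_one] at this
      exact this.symm
    calc ∑' n, c n = lift G z := hlz.symm
    _ ≤ ‖lift G z‖ := le_abs_self _
    _ ≤ ‖lift G‖ * ‖z‖ := (lift G).le_opNorm z
    _ = ‖z‖ := by rw [h.norm_lift, hG1, one_mul]
  tfae_finish
end
end

section
/- Let X and Y be Banach spaces, let J : X* ⊗π Y → L(X, Y) be the canonical map sending ∑ₙ x*ₙ ⊗ yₙ to the operator x ↦ ∑ₙ x*ₙ(x) yₙ, and let T ∈ N(X, Y) be a nuclear operator with a representation T = ∑ₙ λₙ x*ₙ ⊗ yₙ where λₙ > 0, x*ₙ ∈ S_{X*}, yₙ ∈ S_Y and ∑ₙ λₙ < ∞. Then the following are equivalent: (1) ‖T‖_N = ∑ₙ λₙ (i.e. T ∈ NA_N(X, Y)); (2) there is a norm-one functional G ∈ (X* ⊗π Y)* vanishing on ker J such that G(x*ₙ ⊗ yₙ) = 1 for every n; (3) every norm-one functional G ∈ (X* ⊗π Y)* vanishing on ker J whose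 induced functional on N(X, Y) = (X* ⊗π Y)/ker J sends T to ‖T‖_N satisfies G(x*ₙ ⊗ yₙ) = 1 for every n. -/
noncomputable section

open scoped BigOperators

/-- `r` is the value `∑ₙ ‖x*ₙ‖‖yₙ‖` of a nuclear representation `T = ∑ₙ x*ₙ ⊗ yₙ`,
i.e. `T x = ∑ₙ x*ₙ(x) yₙ` with `∑ₙ ‖x*ₙ‖‖yₙ‖ < ∞`. -/
def IsNuclearRep {X Y : Type*} [NormedAddCommGroup X] [NormedSpace ℝ X]
    [NormedAddCommGroup Y] [NormedSpace ℝ Y]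
    (T : X →L[ℝ] Y) (r : ℝ) : Prop :=
  ∃ (f : ℕ → (X →L[ℝ] ℝ)) (y : ℕ → Y),
    Summable (fun n => ‖f n‖ * ‖y n‖) ∧
    (∀ x : X, HasSum (fun n => f n x • y n) (T x)) ∧
    r = ∑' n, ‖f n‖ * ‖y n‖

/-- `T` is a nuclear operator. -/
def IsNuclearOp {X Y : Type*} [NormedAddCommGroup X] [NormedSpace ℝ X]
    [NormedAddCommGroup Y] [NormedSpace ℝ Y] (T : X →L[ℝ] Y) : Prop :=
  ∃ r : ℝ, IsNuclearRep T r

/-- The nuclear norm `‖T‖_N = inf {∑ₙ ‖x*ₙ‖‖yₙ‖ : T = ∑ₙ x*ₙ ⊗ yₙ}`. -/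
def nuclearNorm {X Y : Type*} [NormedAddCommGroup X] [NormedSpace ℝ X]
    [NormedAddCommGroup Y] [NormedSpace ℝ Y] (T : X →L[ℝ] Y) : ℝ :=
  sInf {r : ℝ | IsNuclearRep T r}

/-- `T` attains its nuclear norm: some nuclear representation realizes `‖T‖_N`. -/
def AttainsNuclearNorm {X Y : Type*} [NormedAddCommGroup X] [NormedSpace ℝ X]
    [NormedAddCommGroup Y] [NormedSpace ℝ Y] (T : X →L[ℝ] Y) : Prop :=
  IsNuclearRep T (nuclearNorm T)

/-
The nuclear norm of `T = J z₀` is the norm of `z₀` in the quotient `Z ⧸ ker J`, so the norm-one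
functionals on `Z` vanishing on `ker J` are exactly the norm-one functionals on that quotient, and
Hahn–Banach provides one taking the value `‖T‖_N` at `z₀`. For such a `G`, each
`G (fₙ ⊗ yₙ) ≤ 1` while `G z₀ = ∑ₙ cₙ G (fₙ ⊗ yₙ)`; since all `cₙ > 0`, this equals `∑ₙ cₙ`
exactly when every `G (fₙ ⊗ yₙ) = 1`.
-/

section Quotient

variable {E F : Type*} [NormedAddCommGroup E] [NormedSpace ℝ E]
  [NormedAddCommGroup F] [NormedSpace ℝ F] {K : Submodule ℝ E}

theorem norm_apply_le_opNorm_mul_norm_mk {G : E →L[ℝ] F} (hG : ∀ w ∈ K, G w = 0) (z : E) :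
    ‖G z‖ ≤ ‖G‖ * ‖(Submodule.Quotient.mk z : E ⧸ K)‖ := by
  rcases (norm_nonneg G).eq_or_lt' with hG0 | hGpos
  · simpa [hG0] using G.le_opNorm z
  rw [← div_le_iff₀' hGpos]
  refine QuotientAddGroup.le_norm_iff.mpr fun m hm => ?_
  have hmz : m - z ∈ K := (Submodule.Quotient.eq K).mp hm
  have hGm : G m = G z := sub_eq_zero.mp (by simpa using hG _ hmz)
  rw [div_le_iff₀' hGpos, ← hGm]
  exact G.le_opNorm m

theorem exists_opNorm_eq_one_apply_eq_norm_mk (hK : IsClosed (K : Set E)) (hKtop : K ≠ ⊤)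
    (z : E) : ∃ G : E →L[ℝ] ℝ, ‖G‖ = 1 ∧ (∀ w ∈ K, G w = 0) ∧
      G z = ‖(Submodule.Quotient.mk z : E ⧸ K)‖ := by
  have : IsClosed (K : Set E) := hK
  have : Nontrivial (E ⧸ K) := Submodule.Quotient.nontrivial_iff.mpr hKtop
  obtain ⟨g, hg1, hgz⟩ := exists_dual_vector' ℝ (Submodule.Quotient.mk z : E ⧸ K)
  have hGK : ∀ w ∈ K, (g ∘L K.mkQL) w = 0 := fun w hw => by
    simp [(Submodule.Quotient.mk_eq_zero K).mpr hw]
  refine ⟨g ∘L K.mkQL, le_antisymm ?_ ?_, hGK, hgz⟩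
  · refine ContinuousLinearMap.opNorm_le_bound _ zero_le_one fun w => ?_
    calc ‖g (K.mkQL w)‖ ≤ ‖g‖ * ‖(Submodule.Quotient.mk w : E ⧸ K)‖ := g.le_opNorm _
      _ ≤ 1 * ‖w‖ := by rw [hg1]; gcongr; exact Submodule.Quotient.norm_mk_le K w
  · rw [← hg1]
    refine ContinuousLinearMap.opNorm_le_bound _ (norm_nonneg _) fun q => ?_
    induction q using Submodule.Quotient.induction_on with
    | H w => exact norm_apply_le_opNorm_mul_norm_mk hGK w

end Quotient

theorem eq_one_of_hasSum_mul_eq_tsum {ι : Type*} {c a : ι → ℝ} (hc : ∀ i, 0 < c i)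
    (hsum : Summable c) (ha : ∀ i, a i ≤ 1) (h : HasSum (fun i => c i * a i) (∑' i, c i))
    (i : ι) : a i = 1 := by
  by_contra hne
  have hlt : c i * a i < c i := mul_lt_of_lt_one_right (hc i) ((ha i).lt_of_ne hne)
  exact (hasSum_lt (fun j => mul_le_of_le_one_right (hc j).le (ha j)) hlt h hsum.hasSum).false

theorem nuclearNorm_le {X Y : Type*} [NormedAddCommGroup X] [NormedSpace ℝ X]
    [NormedAddCommGroup Y] [NormedSpace ℝ Y] {T : X →L[ℝ] Y} {r : ℝ}
    (hr : IsNuclearRep T r) : nuclearNorm T ≤ r := by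
  refine csInf_le ⟨0, ?_⟩ hr
  rintro _ ⟨g, y, -, -, rfl⟩
  exact tsum_nonneg fun n => mul_nonneg (norm_nonneg _) (norm_nonneg _)

section ProjectiveTensor

variable {X Y Z : Type*} [NormedAddCommGroup X] [NormedSpace ℝ X]
  [NormedAddCommGroup Y] [NormedSpace ℝ Y] [NormedAddCommGroup Z] [NormedSpace ℝ Z]
  {t : (X →L[ℝ] ℝ) →L[ℝ] Y →L[ℝ] Z} {J : Z →L[ℝ] (X →L[ℝ] Y)}

theorem hasSum_apply_of_hasSum_tmul (hJ : ∀ (f : X →L[ℝ] ℝ) (y : Y) (x : X), J (t f y) x = f x • y)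
    {g : ℕ → X →L[ℝ] ℝ} {y : ℕ → Y} {z : Z} (hz : HasSum (fun n => t (g n) (y n)) z) (x : X) :
    HasSum (fun n => g n x • y n) (J z x) := by
  simpa [hJ] using ((ContinuousLinearMap.apply ℝ Y x).comp J).hasSum hz

theorem isNuclearRep_of_hasSum_tmul
    (hJ : ∀ (f : X →L[ℝ] ℝ) (y : Y) (x : X), J (t f y) x = f x • y)
    {g : ℕ → X →L[ℝ] ℝ} {y : ℕ → Y} {z : Z} (hs : Summable fun n => ‖g n‖ * ‖y n‖)
    (hz : HasSum (fun n => t (g n) (y n)) z) :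
    IsNuclearRep (J z) (∑' n, ‖g n‖ * ‖y n‖) :=
  ⟨g, y, hs, hasSum_apply_of_hasSum_tmul hJ hz, rfl⟩

theorem exists_norm_le_of_isNuclearRep [CompleteSpace Z]
    (ht : ∀ (f : X →L[ℝ] ℝ) (y : Y), ‖t f y‖ ≤ ‖f‖ * ‖y‖)
    (hJ : ∀ (f : X →L[ℝ] ℝ) (y : Y) (x : X), J (t f y) x = f x • y)
    {T : X →L[ℝ] Y} {r : ℝ} (hr : IsNuclearRep T r) : ∃ w : Z, J w = T ∧ ‖w‖ ≤ r := by
  obtain ⟨g, y, hs, hT, rfl⟩ := hr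
  have hsum : Summable fun n => t (g n) (y n) := hs.of_norm_bounded fun n => ht _ _
  refine ⟨_, ContinuousLinearMap.ext fun x => ?_, tsum_of_norm_bounded hs.hasSum fun n => ht _ _⟩
  exact (hasSum_apply_of_hasSum_tmul hJ hsum.hasSum x).unique (hT x)

theorem nuclearNorm_le_norm {lift : ((X →L[ℝ] ℝ) →L[ℝ] (Y →L[ℝ] ℝ)) → (Z →L[ℝ] ℝ)}
    (h : IsProjTensorProduct (X →L[ℝ] ℝ) Y Z t lift)
    (hJ : ∀ (f : X →L[ℝ] ℝ) (y : Y) (x : X), J (t f y) x = f x • y) (z : Z) :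
    nuclearNorm (J z) ≤ ‖z‖ := by
  rw [h.norm_eq_sInf z]
  obtain ⟨g, y, hs, hz⟩ := h.exists_rep z
  refine le_csInf ⟨_, g, y, hs, hz, rfl⟩ ?_
  rintro _ ⟨g', y', hs', hz', rfl⟩
  exact nuclearNorm_le (isNuclearRep_of_hasSum_tmul hJ hs' hz')

theorem nuclearNorm_eq_norm_mk_ker [CompleteSpace Z]
    {lift : ((X →L[ℝ] ℝ) →L[ℝ] (Y →L[ℝ] ℝ)) → (Z →L[ℝ] ℝ)}
    (h : IsProjTensorProduct (X →L[ℝ] ℝ) Y Z t lift)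
    (hJ : ∀ (f : X →L[ℝ] ℝ) (y : Y) (x : X), J (t f y) x = f x • y) (z : Z) :
    nuclearNorm (J z) = ‖(Submodule.Quotient.mk z : Z ⧸ J.ker)‖ := by
  apply le_antisymm
  · refine QuotientAddGroup.le_norm_iff.mpr fun m hm => ?_
    have hJm : J m = J z := by
      simpa [sub_eq_zero] using (Submodule.Quotient.eq _).mp hm
    exact hJm ▸ nuclearNorm_le_norm h hJ m
  · obtain ⟨g, y, hs, hz⟩ := h.exists_rep z
    refine le_csInf ⟨_, isNuclearRep_of_hasSum_tmul hJ hs hz⟩ fun r hr => ?_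
    obtain ⟨w, hJw, hwr⟩ := exists_norm_le_of_isNuclearRep h.norm_tmul_le hJ hr
    have hwz : (Submodule.Quotient.mk w : Z ⧸ J.ker) = Submodule.Quotient.mk z :=
      (Submodule.Quotient.eq _).mpr (by simp [hJw])
    exact hwz ▸ (Submodule.Quotient.norm_mk_le _ w).trans hwr

theorem ker_ne_top_of_tmul_ne_zero
    (hJ : ∀ (f : X →L[ℝ] ℝ) (y : Y) (x : X), J (t f y) x = f x • y)
    {f : X →L[ℝ] ℝ} {y : Y} (hf : f ≠ 0) (hy : y ≠ 0) : J.ker ≠ ⊤ := by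
  obtain ⟨x, hx⟩ := DFunLike.ne_iff.mp hf
  intro htop
  have hker : J (t f y) = 0 := LinearMap.mem_ker.mp (htop ▸ Submodule.mem_top)
  have hJ0 : f x • y = 0 := by rw [← hJ, hker]; rfl
  rw [smul_eq_zero] at hJ0
  exact hJ0.elim hx hy

end ProjectiveTensor

theorem normAttaining_nuclear_tfae_general
    {X Y Z : Type*} [NormedAddCommGroup X] [NormedSpace ℝ X]
    [NormedAddCommGroup Y] [NormedSpace ℝ Y]
    [NormedAddCommGroup Z] [NormedSpace ℝ Z] [CompleteSpace Z]
    (t : (X →L[ℝ] ℝ) →L[ℝ] Y →L[ℝ] Z)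
    (lift : ((X →L[ℝ] ℝ) →L[ℝ] (Y →L[ℝ] ℝ)) → (Z →L[ℝ] ℝ))
    (h : IsProjTensorProduct (X →L[ℝ] ℝ) Y Z t lift)
    (J : Z →L[ℝ] (X →L[ℝ] Y))
    (hJ : ∀ (f : X →L[ℝ] ℝ) (y : Y) (x : X), J (t f y) x = f x • y)
    (T : X →L[ℝ] Y) (c : ℕ → ℝ) (f : ℕ → (X →L[ℝ] ℝ)) (y : ℕ → Y)
    (hc : ∀ n, 0 < c n) (hf : ∀ n, ‖f n‖ = 1) (hy : ∀ n, ‖y n‖ = 1)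
    (hsum : Summable c)
    (z₀ : Z) (hz₀ : HasSum (fun n => c n • t (f n) (y n)) z₀) (hJz₀ : J z₀ = T) :
    List.TFAE
      [ nuclearNorm T = ∑' n, c n,
        ∃ G : Z →L[ℝ] ℝ, ‖G‖ = 1 ∧ (∀ w : Z, J w = 0 → G w = 0) ∧
          ∀ n, G (t (f n) (y n)) = 1,
        ∀ G : Z →L[ℝ] ℝ, ‖G‖ = 1 → (∀ w : Z, J w = 0 → G w = 0) →
          G z₀ = nuclearNorm T → ∀ n, G (t (f n) (y n)) = 1 ] := by
  have hnorm : (fun n => ‖c n • f n‖ * ‖y n‖) = c := by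
    ext n; simp [norm_smul, hf, hy, (hc n).le]
  have hle_sum : nuclearNorm T ≤ ∑' n, c n := by
    have := isNuclearRep_of_hasSum_tmul (g := fun n => c n • f n) hJ (hnorm ▸ hsum)
      (by simpa using hz₀)
    rw [hnorm, hJz₀] at this
    exact nuclearNorm_le this
  have hN : nuclearNorm T = ‖(Submodule.Quotient.mk z₀ : Z ⧸ J.ker)‖ :=
    hJz₀ ▸ nuclearNorm_eq_norm_mk_ker h hJ z₀
  have hKtop : J.ker ≠ ⊤ := ker_ne_top_of_tmul_ne_zero hJ (f := f 0) (y := y 0)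
    (norm_ne_zero_iff.mp (by simp [hf])) (norm_ne_zero_iff.mp (by simp [hy]))
  obtain ⟨G₀, hG₀, hG₀K, hG₀z₀⟩ :=
    exists_opNorm_eq_one_apply_eq_norm_mk J.isClosed_ker hKtop z₀
  have hG_hasSum (G : Z →L[ℝ] ℝ) : HasSum (fun n => c n * G (t (f n) (y n))) (G z₀) := by
    simpa using G.hasSum hz₀
  have hGle (G : Z →L[ℝ] ℝ) (hG : ‖G‖ = 1) (n : ℕ) : G (t (f n) (y n)) ≤ 1 :=
    calc G (t (f n) (y n)) ≤ ‖G‖ * ‖t (f n) (y n)‖ := (le_abs_self _).trans (G.le_opNorm _)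
      _ ≤ 1 := by simpa [hG, hf, hy] using h.norm_tmul_le (f n) (y n)
  tfae_have 1 → 3 := fun h1 G hG _ hGN =>
    eq_one_of_hasSum_mul_eq_tsum hc hsum (hGle G hG) (hGN.trans h1 ▸ hG_hasSum G)
  tfae_have 3 → 2 := fun h3 =>
    ⟨G₀, hG₀, hG₀K, h3 G₀ hG₀ hG₀K (hG₀z₀.trans hN.symm)⟩
  tfae_have 2 → 1 := by
    rintro ⟨G, hG, hGK, hG1⟩
    have hGS : G z₀ = ∑' n, c n := (hG_hasSum G).unique (by simpa [hG1] using hsum.hasSum)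
    refine le_antisymm hle_sum ?_
    calc ∑' n, c n = G z₀ := hGS.symm
      _ ≤ ‖G‖ * ‖(Submodule.Quotient.mk z₀ : Z ⧸ J.ker)‖ :=
        (le_abs_self _).trans (norm_apply_le_opNorm_mul_norm_mk (G := G) hGK z₀)
      _ = nuclearNorm T := by rw [hG, one_mul, hN]
  tfae_finish

/-- Characterization of norm-attaining nuclear operators. Here
`Z = X* ⊗π Y`, `J : X* ⊗π Y → L(X,Y)` is the canonical map, and `T = J z₀` where
`z₀ = ∑ₙ cₙ fₙ ⊗ yₙ` with `cₙ > 0` and unit vectors `fₙ ∈ S_{X*}`, `yₙ ∈ S_Y`. TFAE: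
(1) `‖T‖_N = ∑ₙ cₙ`; (2) there is a norm-one functional `G` on `X* ⊗π Y` vanishing on
`ker J` with `G(fₙ ⊗ yₙ) = 1` for all n; (3) every norm-one functional `G` on `X* ⊗π Y`
vanishing on `ker J` whose induced functional on `N(X,Y)` sends `T` to `‖T‖_N`
(i.e. `G z₀ = ‖T‖_N`) satisfies `G(fₙ ⊗ yₙ) = 1` for all n. -/
theorem normAttaining_nuclear_tfae
    {X Y Z : Type*} [NormedAddCommGroup X] [NormedSpace ℝ X] [CompleteSpace X]
    [NormedAddCommGroup Y] [NormedSpace ℝ Y] [CompleteSpace Y]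
    [NormedAddCommGroup Z] [NormedSpace ℝ Z] [CompleteSpace Z]
    (t : (X →L[ℝ] ℝ) →L[ℝ] Y →L[ℝ] Z)
    (lift : ((X →L[ℝ] ℝ) →L[ℝ] (Y →L[ℝ] ℝ)) → (Z →L[ℝ] ℝ))
    (h : IsProjTensorProduct (X →L[ℝ] ℝ) Y Z t lift)
    (J : Z →L[ℝ] (X →L[ℝ] Y))
    (hJ : ∀ (f : X →L[ℝ] ℝ) (y : Y) (x : X), J (t f y) x = f x • y)
    (T : X →L[ℝ] Y) (c : ℕ → ℝ) (f : ℕ → (X →L[ℝ] ℝ)) (y : ℕ → Y)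
    (hc : ∀ n, 0 < c n) (hf : ∀ n, ‖f n‖ = 1) (hy : ∀ n, ‖y n‖ = 1)
    (hsum : Summable c)
    (z₀ : Z) (hz₀ : HasSum (fun n => c n • t (f n) (y n)) z₀) (hJz₀ : J z₀ = T) :
    List.TFAE
      [ nuclearNorm T = ∑' n, c n,
        ∃ G : Z →L[ℝ] ℝ, ‖G‖ = 1 ∧ (∀ w : Z, J w = 0 → G w = 0) ∧
          ∀ n, G (t (f n) (y n)) = 1,
        ∀ G : Z →L[ℝ] ℝ, ‖G‖ = 1 → (∀ w : Z, J w = 0 → G w = 0) →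
          G z₀ = nuclearNorm T → ∀ n, G (t (f n) (y n)) = 1 ] :=
  normAttaining_nuclear_tfae_general t lift h J hJ T c f y hc hf hy hsum z₀ hz₀ hJz₀
end
end

section
/- Let X and Y be finite-dimensional Banach spaces. Then every element of X ⊗π Y attains its projective norm; that is, NAπ(X ⊗π Y) = X ⊗π Y. -/
noncomputable section

open scoped BigOperators

/-!
Let `K` be the set of elementary tensors `x ⊗ y` with `‖x‖, ‖y‖ ≤ 1`. A representation
`z = ∑ xₙ ⊗ yₙ` with `∑ ‖xₙ‖‖yₙ‖ ≤ s` exhibits `s⁻¹ • z` as a limit of subconvex combinations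
of points of `K`, so by the infimum formula for `‖z‖` the point `‖z‖⁻¹ • z` lies in the closed
convex hull of `K`. When `X` and `Y` are finite-dimensional, so is `Z`, and `K` is compact;
by Carathéodory's theorem its convex hull is then compact, hence closed. Thus
`‖z‖⁻¹ • z = ∑ wᵢ • xᵢ ⊗ yᵢ` is a finite convex combination, and
`z = ∑ (‖z‖ wᵢ • xᵢ) ⊗ yᵢ` is a representation of cost at most `‖z‖`.
-/
open Set Metric Filter Topology

section Caratheodory

variable {𝕜 E : Type*} [Field 𝕜] [LinearOrder 𝕜] [IsStrictOrderedRing 𝕜]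
  [AddCommGroup E] [Module 𝕜 E]

theorem Convex.sum_smul_mem_of_sum_le_one {C : Set E} (hC : Convex 𝕜 C) (h0 : (0 : E) ∈ C)
    {ι : Type*} {F : Finset ι} {w : ι → 𝕜} {p : ι → E} (hw₀ : ∀ i ∈ F, 0 ≤ w i)
    (hw₁ : ∑ i ∈ F, w i ≤ 1) (hp : ∀ i ∈ F, p i ∈ C) : ∑ i ∈ F, w i • p i ∈ C := by
  rcases (Finset.sum_nonneg hw₀).eq_or_lt with hW | hW
  · have hw : ∀ i ∈ F, w i = 0 := (Finset.sum_eq_zero_iff_of_nonneg hw₀).1 hW.symm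
    rw [Finset.sum_eq_zero fun i hi => by rw [hw i hi, zero_smul]]
    exact h0
  · have hcm : ∑ i ∈ F, w i • p i = (∑ i ∈ F, w i) • F.centerMass w p := by
      rw [Finset.centerMass, smul_inv_smul₀ hW.ne']
    rw [hcm]
    exact (hC.starConvex h0).smul_mem (hC.centerMass_mem hw₀ hW hp) hW.le hw₁

theorem convexHull_eq_biUnion_image_stdSimplex [FiniteDimensional 𝕜 E] (s : Set E) :
    convexHull 𝕜 s = ⋃ c ∈ Iic (Module.finrank 𝕜 E + 1),
      (fun p : (Fin c → 𝕜) × (Fin c → E) => ∑ i, p.1 i • p.2 i) ''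
        (stdSimplex 𝕜 (Fin c) ×ˢ univ.pi fun _ => s) := by
  apply Subset.antisymm
  · intro x hx
    obtain ⟨ι, _, z, w, hzs, hind, hw, hw₁, rfl⟩ := eq_pos_convex_span_of_mem_convexHull hx
    have hcard : Fintype.card ι ≤ Module.finrank 𝕜 E + 1 :=
      hind.card_le_finrank_succ.trans (by gcongr; exact Submodule.finrank_le _)
    let e := (Fintype.equivFin ι).symm
    refine mem_biUnion hcard ⟨(w ∘ e, z ∘ e), ⟨⟨fun j => (hw _).le, ?_⟩,
      fun j _ => hzs (mem_range_self _)⟩, ?_⟩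
    · rw [← hw₁]
      exact Fintype.sum_equiv e _ _ fun _ => rfl
    · exact Fintype.sum_equiv e _ _ fun _ => rfl
  · simp only [iUnion_subset_iff]
    rintro c - _ ⟨⟨w, p⟩, ⟨hw, hp⟩, rfl⟩
    exact (convex_convexHull 𝕜 s).sum_mem (fun i _ => hw.1 i) hw.2
      fun i _ => subset_convexHull 𝕜 s (hp i (mem_univ i))

end Caratheodory

theorem IsCompact.convexHull_of_finiteDimensional {E : Type*} [NormedAddCommGroup E]
    [NormedSpace ℝ E] [FiniteDimensional ℝ E] {s : Set E} (hs : IsCompact s) :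
    IsCompact (convexHull ℝ s) := by
  rw [convexHull_eq_biUnion_image_stdSimplex]
  refine (finite_Iic _).isCompact_biUnion fun c _ => ?_
  refine ((isCompact_stdSimplex ℝ _).prod (isCompact_univ_pi fun _ => hs)).image ?_
  exact continuous_finsetSum _ fun i _ =>
    ((continuous_apply i).comp continuous_fst).smul ((continuous_apply i).comp continuous_snd)

theorem hasSum_comp_extend_zero {ι κ A M : Type*} [Fintype ι] [Zero A] [AddCommMonoid M]
    [TopologicalSpace M] {g : ι → κ} (hg : Function.Injective g) (a : ι → A) (F : A → M)
    (hF : F 0 = 0) : HasSum (fun n => F (Function.extend g a 0 n)) (∑ i, F (a i)) := by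
  have hFa : (fun n => F (Function.extend g a 0 n)) = Function.extend g (F ∘ a) 0 := by
    ext n
    rw [Function.apply_extend F]
    congr
    exact funext fun _ => hF
  rw [hFa, hasSum_extend_zero hg]
  exact hasSum_fintype _

section NormedSpace

variable {E : Type*} [NormedAddCommGroup E] [NormedSpace ℝ E]

theorem inv_norm_smul_mem_closedBall_zero (x : E) : ‖x‖⁻¹ • x ∈ closedBall (0 : E) 1 := by
  rw [mem_closedBall_zero_iff, norm_smul, norm_inv, norm_norm]
  exact inv_mul_le_one_of_le₀ le_rfl (norm_nonneg x)

theorem norm_smul_inv_norm_smul (x : E) : ‖x‖ • ‖x‖⁻¹ • x = x := by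
  rcases eq_or_ne x 0 with rfl | hx
  · simp
  · exact smul_inv_smul₀ (norm_ne_zero_iff.2 hx) x

end NormedSpace

section UnitTensors

variable {X Y Z : Type*} [NormedAddCommGroup X] [NormedSpace ℝ X]
  [NormedAddCommGroup Y] [NormedSpace ℝ Y] [NormedAddCommGroup Z] [NormedSpace ℝ Z]
  (t : X →L[ℝ] Y →L[ℝ] Z)

def unitTensors : Set Z := image2 (fun x y => t x y) (closedBall 0 1) (closedBall 0 1)

theorem zero_mem_unitTensors : (0 : Z) ∈ unitTensors t :=
  ⟨0, by simp, 0, by simp, by simp⟩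

theorem isCompact_unitTensors [FiniteDimensional ℝ X] [FiniteDimensional ℝ Y] :
    IsCompact (unitTensors t) := by
  rw [unitTensors, ← image_prod]
  exact ((isCompact_closedBall 0 1).prod (isCompact_closedBall 0 1)).image t.continuous₂

theorem exists_mem_unitTensors_eq_smul (x : X) (y : Y) :
    ∃ k ∈ unitTensors t, t x y = (‖x‖ * ‖y‖) • k := by
  refine ⟨t (‖x‖⁻¹ • x) (‖y‖⁻¹ • y), mem_image2_of_mem (inv_norm_smul_mem_closedBall_zero x)
    (inv_norm_smul_mem_closedBall_zero y), ?_⟩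
  calc t x y = t (‖x‖ • ‖x‖⁻¹ • x) (‖y‖ • ‖y‖⁻¹ • y) := by
        rw [norm_smul_inv_norm_smul, norm_smul_inv_norm_smul]
    _ = (‖x‖ * ‖y‖) • t (‖x‖⁻¹ • x) (‖y‖⁻¹ • y) := by
        generalize ‖x‖⁻¹ • x = u
        generalize ‖y‖⁻¹ • y = v
        rw [map_smul, map_smul, smul_apply, smul_smul, mul_comm]

theorem inv_smul_mem_closure_convexHull_unitTensors {x : ℕ → X} {y : ℕ → Y} {z : Z} {s : ℝ}
    (hs : 0 < s) (hsum : Summable fun n => ‖x n‖ * ‖y n‖)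
    (hz : HasSum (fun n => t (x n) (y n)) z) (hle : ∑' n, ‖x n‖ * ‖y n‖ ≤ s) :
    s⁻¹ • z ∈ closure (convexHull ℝ (unitTensors t)) := by
  choose k hk htk using fun n => exists_mem_unitTensors_eq_smul t (x n) (y n)
  refine mem_closure_of_tendsto (hz.const_smul s⁻¹) (Eventually.of_forall fun F => ?_)
  simp only [htk, smul_smul]
  refine (convex_convexHull ℝ _).sum_smul_mem_of_sum_le_one
    (subset_convexHull ℝ _ (zero_mem_unitTensors t)) (fun n _ => by positivity) ?_
    (fun n _ => subset_convexHull ℝ _ (hk n))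
  rw [← Finset.mul_sum, inv_mul_le_one₀ hs]
  exact (hsum.sum_le_tsum F fun n _ => by positivity).trans hle

theorem attainsProjNorm_of_fintype {ι : Type*} [Fintype ι] (x : ι → X) (y : ι → Y) {z : Z}
    (hz : ∑ i, t (x i) (y i) = z) (hnorm : ‖z‖ = ∑ i, ‖x i‖ * ‖y i‖) : AttainsProjNorm t z := by
  obtain ⟨g, hg⟩ := exists_injective_nat ι
  let p : ℕ → X × Y := Function.extend g (fun i => (x i, y i)) 0
  have hnorms : HasSum (fun n => ‖(p n).1‖ * ‖(p n).2‖) (∑ i, ‖x i‖ * ‖y i‖) :=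
    hasSum_comp_extend_zero hg _ (fun q : X × Y => ‖q.1‖ * ‖q.2‖) (by simp)
  refine ⟨fun n => (p n).1, fun n => (p n).2, hnorms.summable,
    hz ▸ hasSum_comp_extend_zero hg _ (fun q : X × Y => t q.1 q.2) (by simp),
    hnorm.trans hnorms.tsum_eq.symm⟩

end UnitTensors

namespace IsProjTensorProduct

variable {X Y Z : Type*} [NormedAddCommGroup X] [NormedSpace ℝ X]
  [NormedAddCommGroup Y] [NormedSpace ℝ Y] [NormedAddCommGroup Z] [NormedSpace ℝ Z]
  {t : X →L[ℝ] Y →L[ℝ] Z} {lift : (X →L[ℝ] (Y →L[ℝ] ℝ)) → (Z →L[ℝ] ℝ)}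

theorem finiteDimensional [FiniteDimensional ℝ X] [FiniteDimensional ℝ Y]
    (h : IsProjTensorProduct X Y Z t lift) : FiniteDimensional ℝ Z := by
  let L := TensorProduct.lift t.toLinearMap₁₂
  have hmem : ∀ x y, t x y ∈ LinearMap.range L := fun x y =>
    LinearMap.mem_range.2 ⟨x ⊗ₜ y, by simp [L]⟩
  refine Module.Finite.of_surjective L fun z => ?_
  obtain ⟨x, y, -, hz⟩ := h.exists_rep z
  exact (LinearMap.range L).closed_of_finiteDimensional.mem_of_tendsto hz
    (Eventually.of_forall fun F => Submodule.sum_mem _ fun n _ => hmem _ _)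

theorem exists_hasSum_tsum_lt (h : IsProjTensorProduct X Y Z t lift) {z : Z} {s : ℝ}
    (hs : ‖z‖ < s) : ∃ (x : ℕ → X) (y : ℕ → Y), Summable (fun n => ‖x n‖ * ‖y n‖) ∧
      HasSum (fun n => t (x n) (y n)) z ∧ ∑' n, ‖x n‖ * ‖y n‖ < s := by
  rw [h.norm_eq_sInf z] at hs
  obtain ⟨x, y, hsum, hz⟩ := h.exists_rep z
  obtain ⟨_, ⟨x, y, hsum, hz, rfl⟩, hlt⟩ :=
    exists_lt_of_csInf_lt (by exact ⟨_, x, y, hsum, hz, rfl⟩) hs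
  exact ⟨x, y, hsum, hz, hlt⟩

theorem inv_norm_smul_mem_closure_convexHull (h : IsProjTensorProduct X Y Z t lift) (z : Z) :
    ‖z‖⁻¹ • z ∈ closure (convexHull ℝ (unitTensors t)) := by
  rcases eq_or_ne z 0 with rfl | hz
  · rw [smul_zero]
    exact subset_closure (subset_convexHull ℝ _ (zero_mem_unitTensors t))
  have hlim : Tendsto (fun s : ℝ => s⁻¹ • z) (𝓝[>] ‖z‖) (𝓝 (‖z‖⁻¹ • z)) :=
    ((continuousAt_inv₀ (norm_ne_zero_iff.2 hz)).tendsto.smul_const z).mono_left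
      nhdsWithin_le_nhds
  refine isClosed_closure.mem_of_tendsto hlim (eventually_nhdsWithin_of_forall fun s hs => ?_)
  obtain ⟨x, y, hsum, hxy, hlt⟩ := h.exists_hasSum_tsum_lt hs
  exact inv_smul_mem_closure_convexHull_unitTensors t ((norm_nonneg z).trans_lt hs) hsum hxy
    hlt.le

theorem attainsProjNorm_of_inv_norm_smul_mem_convexHull (h : IsProjTensorProduct X Y Z t lift)
    {z : Z} (hz : ‖z‖⁻¹ • z ∈ convexHull ℝ (unitTensors t)) : AttainsProjNorm t z := by
  obtain ⟨ι, _, w, k, hw₀, hw₁, hk, hwk⟩ := mem_convexHull_iff_exists_fintype.1 hz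
  choose u hu v hv huv using hk
  have hrep : ∑ i, t ((‖z‖ * w i) • u i) (v i) = z := by
    simp only [map_smul, smul_apply, huv, mul_smul, ← Finset.smul_sum, hwk,
      norm_smul_inv_norm_smul]
  have hle : ∑ i, ‖(‖z‖ * w i) • u i‖ * ‖v i‖ ≤ ‖z‖ := calc
    _ ≤ ∑ i, ‖z‖ * w i := Finset.sum_le_sum fun i _ => by
      have hw : 0 ≤ ‖z‖ * w i := mul_nonneg (norm_nonneg z) (hw₀ i)
      rw [norm_smul, Real.norm_of_nonneg hw, mul_assoc]
      exact mul_le_of_le_one_right hw (mul_le_one₀ (mem_closedBall_zero_iff.1 (hu i))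
        (norm_nonneg _) (mem_closedBall_zero_iff.1 (hv i)))
    _ = ‖z‖ := by rw [← Finset.mul_sum, hw₁, mul_one]
  have hge : ‖z‖ ≤ ∑ i, ‖(‖z‖ * w i) • u i‖ * ‖v i‖ := calc
    ‖z‖ = ‖∑ i, t ((‖z‖ * w i) • u i) (v i)‖ := by rw [hrep]
    _ ≤ ∑ i, ‖t ((‖z‖ * w i) • u i) (v i)‖ := norm_sum_le _ _
    _ ≤ _ := Finset.sum_le_sum fun i _ => h.norm_tmul_le _ _
  exact attainsProjNorm_of_fintype t _ _ hrep (le_antisymm hge hle)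

end IsProjTensorProduct

theorem attainsProjNorm_of_finiteDimensional_general
    {X Y Z : Type*} [NormedAddCommGroup X] [NormedSpace ℝ X] [FiniteDimensional ℝ X]
    [NormedAddCommGroup Y] [NormedSpace ℝ Y] [FiniteDimensional ℝ Y]
    [NormedAddCommGroup Z] [NormedSpace ℝ Z]
    (t : X →L[ℝ] Y →L[ℝ] Z) (lift : (X →L[ℝ] (Y →L[ℝ] ℝ)) → (Z →L[ℝ] ℝ))
    (h : IsProjTensorProduct X Y Z t lift) :
    ∀ z : Z, AttainsProjNorm t z := by
  have := h.finiteDimensional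
  have hclosed : IsClosed (convexHull ℝ (unitTensors t)) :=
    (isCompact_unitTensors t).convexHull_of_finiteDimensional.isClosed
  intro z
  exact h.attainsProjNorm_of_inv_norm_smul_mem_convexHull
    (hclosed.closure_eq ▸ h.inv_norm_smul_mem_closure_convexHull z)

/-- If `X` and `Y` are finite dimensional Banach spaces then every element
of `X ⊗π Y` attains its projective norm. -/
theorem attainsProjNorm_of_finiteDimensional
    {X Y Z : Type*} [NormedAddCommGroup X] [NormedSpace ℝ X] [FiniteDimensional ℝ X]
    [NormedAddCommGroup Y] [NormedSpace ℝ Y] [FiniteDimensional ℝ Y]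
    [NormedAddCommGroup Z] [NormedSpace ℝ Z] [CompleteSpace Z]
    (t : X →L[ℝ] Y →L[ℝ] Z) (lift : (X →L[ℝ] (Y →L[ℝ] ℝ)) → (Z →L[ℝ] ℝ))
    (h : IsProjTensorProduct X Y Z t lift) :
    ∀ z : Z, AttainsProjNorm t z :=
  attainsProjNorm_of_finiteDimensional_general t lift h
end
end

section
/- Let X and Y be Banach spaces and let B ∈ B(X × Y) = (X ⊗π Y)* with ‖B‖ = 1. If B attains its norm as a linear functional on X ⊗π Y at an element z ∈ NAπ(X ⊗π Y) with ‖z‖π = 1 (i.e. B(z) = 1), then B attains its norm as a bilinear form, i.e. B ∈ NA(X × Y). -/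
noncomputable section

open scoped BigOperators

/-- If a norm-one bilinear form `B ∈ B(X × Y) = (X ⊗π Y)*` attains its norm
as a linear functional at a norm-one element of `NAπ(X ⊗π Y)`, then `B` attains its norm as a
bilinear form. -/
theorem bilinear_normAttaining_of_attains_at_NA_tensor
    {X Y Z : Type*} [NormedAddCommGroup X] [NormedSpace ℝ X] [CompleteSpace X]
    [NormedAddCommGroup Y] [NormedSpace ℝ Y] [CompleteSpace Y]
    [NormedAddCommGroup Z] [NormedSpace ℝ Z] [CompleteSpace Z]
    (t : X →L[ℝ] Y →L[ℝ] Z) (lift : (X →L[ℝ] (Y →L[ℝ] ℝ)) → (Z →L[ℝ] ℝ))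
    (h : IsProjTensorProduct X Y Z t lift)
    (B : X →L[ℝ] Y →L[ℝ] ℝ) (hB : ‖B‖ = 1)
    (z : Z) (hz : ‖z‖ = 1) (hNA : AttainsProjNorm t z) (hBz : lift B z = 1) :
    ∃ (x : X) (y : Y), ‖x‖ = 1 ∧ ‖y‖ = 1 ∧ |B x y| = ‖B‖ := by
  obtain ⟨x, y, hsum, hhs, hzrep⟩ := hNA
  have htsum : ∑' n, ‖x n‖ * ‖y n‖ = 1 := by rw [← hzrep, hz]
  -- apply lift B to the sum
  have hsB : HasSum (fun n => B (x n) (y n)) 1 := by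
    have := (lift B).hasSum hhs
    rw [hBz] at this
    simpa only [h.lift_tmul] using this
  have hle : ∀ n, B (x n) (y n) ≤ ‖x n‖ * ‖y n‖ := by
    intro n
    calc B (x n) (y n) ≤ |B (x n) (y n)| := le_abs_self _
      _ ≤ ‖B (x n)‖ * ‖y n‖ := by
          simpa using (B (x n)).le_opNorm (y n)
      _ ≤ (‖B‖ * ‖x n‖) * ‖y n‖ := by
          exact mul_le_mul_of_nonneg_right (B.le_opNorm (x n)) (norm_nonneg _)
      _ = ‖x n‖ * ‖y n‖ := by rw [hB, one_mul]
  -- equality termwise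
  have heq : ∀ n, B (x n) (y n) = ‖x n‖ * ‖y n‖ := by
    intro n
    by_contra hne
    have hlt : B (x n) (y n) < ‖x n‖ * ‖y n‖ := lt_of_le_of_ne (hle n) hne
    have : ∑' m, B (x m) (y m) < ∑' m, ‖x m‖ * ‖y m‖ :=
      Summable.tsum_lt_tsum hle hlt hsB.summable hsum
    rw [hsB.tsum_eq, htsum] at this
    exact lt_irrefl _ this
  -- find n with positive term
  have hpos : ∃ n, 0 < ‖x n‖ * ‖y n‖ := by
    by_contra hnone
    push_neg at hnone
    have hzero : ∀ n, ‖x n‖ * ‖y n‖ = 0 := fun n =>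
      le_antisymm (hnone n) (mul_nonneg (norm_nonneg _) (norm_nonneg _))
    have : (1 : ℝ) = 0 := by
      rw [← htsum]
      simp [hzero]
    norm_num at this
  obtain ⟨n, hn⟩ := hpos
  have hx0 : ‖x n‖ ≠ 0 := by
    intro hx; rw [hx, zero_mul] at hn; exact lt_irrefl _ hn
  have hy0 : ‖y n‖ ≠ 0 := by
    intro hy; rw [hy, mul_zero] at hn; exact lt_irrefl _ hn
  refine ⟨‖x n‖⁻¹ • x n, ‖y n‖⁻¹ • y n, ?_, ?_, ?_⟩
  · rw [norm_smul, norm_inv, norm_norm, inv_mul_cancel₀ hx0]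
  · rw [norm_smul, norm_inv, norm_norm, inv_mul_cancel₀ hy0]
  · have : B (‖x n‖⁻¹ • x n) (‖y n‖⁻¹ • y n) = ‖x n‖⁻¹ * (‖y n‖⁻¹ * B (x n) (y n)) := by
      simp [map_smul]; ring
    rw [this, heq n, hB]
    rw [abs_of_nonneg]
    · field_simp
    · positivity
end
end

section
/- Let X and Y be Banach spaces both satisfying the metric π-property. Then NAπ(X ⊗π Y) is ‖·‖π-dense in X ⊗π Y. -/
noncomputable section

open scoped BigOperators

/-- A Banach space `X` has the metric π-property: for every ε > 0 and finite set of unit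
vectors there is a finite dimensional `1`-complemented subspace (the range of a norm-one
projection) containing ε-approximations of all of them. -/
def MetricPiProperty (X : Type*) [NormedAddCommGroup X] [NormedSpace ℝ X] : Prop :=
  ∀ ε : ℝ, 0 < ε → ∀ s : Finset X, (∀ x ∈ s, ‖x‖ = 1) →
    ∃ P : X →L[ℝ] X, IsIdempotentElem P ∧ ‖P‖ = 1 ∧
      FiniteDimensional ℝ (LinearMap.range (P : X →ₗ[ℝ] X)) ∧
      ∀ x ∈ s, ∃ x' ∈ LinearMap.range (P : X →ₗ[ℝ] X), ‖x - x'‖ < ε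

/-! If `M`, `N` are finite-dimensional ranges of norm-one projections `P`, `Q`, every tensor `w` in
the span of `M ⊗ N` attains its projective norm. By Carathéodory, the convex hull `K` of
`{m ⊗ n : m ∈ B_M, n ∈ B_N}` is compact, and it contains the unit ball of that span: a functional
`f` separating a point `u` from `K` gives the form `(x, y) ↦ f (P x ⊗ Q y)` of norm below `f u`,
while its lift agrees with `f` on the span. So `w / ‖w‖` is a finite convex combination of
elementary tensors of norm at most one, which is a representation of cost `‖w‖`. Density then
follows by replacing the factors of a partial sum `∑ xᵢ ⊗ yᵢ` by nearby vectors of `M` and `N`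
given by the metric π-property. -/

open Module Set

theorem isCompact_convexHull_of_subset_submodule {E : Type*} [NormedAddCommGroup E]
    [NormedSpace ℝ E] {s : Set E} (hs : IsCompact s) (W : Submodule ℝ E) [FiniteDimensional ℝ W]
    (hsW : s ⊆ W) : IsCompact (convexHull ℝ s) := by
  rcases s.eq_empty_or_nonempty with rfl | ⟨a₀, ha₀⟩
  · simp
  set d := finrank ℝ W + 1
  suffices convexHull ℝ s = (fun p : (Fin d → ℝ) × (Fin d → E) => ∑ i, p.1 i • p.2 i) ''
      (stdSimplex ℝ (Fin d) ×ˢ univ.pi fun _ => s) by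
    rw [this]
    exact ((isCompact_stdSimplex ℝ _).prod (isCompact_univ_pi fun _ => hs)).image (by fun_prop)
  refine Subset.antisymm (fun x hx => ?_) ?_
  · obtain ⟨ι, _, z, w, hzs, hz, hw0, hw1, rfl⟩ := eq_pos_convex_span_of_mem_convexHull hx
    -- Carathéodory: an affinely independent family in `W` has at most `finrank W + 1` points
    have hspan : vectorSpan ℝ (range z) ≤ W := Submodule.span_le.2 <| by
      rintro _ ⟨p, hp, q, hq, rfl⟩
      exact W.sub_mem (hsW (hzs hp)) (hsW (hzs hq))
    have hcard : Fintype.card ι ≤ d :=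
      hz.card_le_finrank_succ.trans (Nat.add_le_add_right (Submodule.finrank_mono hspan) 1)
    let σ : ι ⊕ Fin (d - Fintype.card ι) ≃ Fin d :=
      Fintype.equivFinOfCardEq (by simp only [Fintype.card_sum, Fintype.card_fin]; omega)
    refine ⟨(fun j => Sum.elim w 0 (σ.symm j), fun j => Sum.elim z (fun _ => a₀) (σ.symm j)),
      ⟨⟨fun j => ?_, ?_⟩, fun j _ => ?_⟩, ?_⟩
    · show 0 ≤ Sum.elim w 0 (σ.symm j)
      rcases σ.symm j with i | i
      exacts [(hw0 i).le, le_rfl]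
    · simp [σ.symm.sum_comp (Sum.elim w 0), hw1]
    · show Sum.elim z (fun _ => a₀) (σ.symm j) ∈ s
      rcases σ.symm j with i | i
      exacts [hzs (mem_range_self i), ha₀]
    · simp [σ.symm.sum_comp fun k => Sum.elim w 0 k • Sum.elim z (fun _ => a₀) k]
  · rintro _ ⟨⟨w, a⟩, ⟨hw, ha⟩, rfl⟩
    exact mem_convexHull_of_exists_fintype w a hw.1 hw.2 (fun i => ha i (mem_univ i)) rfl

theorem ContinuousLinearMap.IsIdempotentElem.apply_of_mem_range {R M : Type*} [Semiring R]
    [TopologicalSpace M] [AddCommMonoid M] [Module R M] {P : M →L[R] M} (hP : IsIdempotentElem P)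
    {x : M} (hx : x ∈ LinearMap.range (P : M →ₗ[R] M)) : P x = x := by
  obtain ⟨y, rfl⟩ := hx
  exact DFunLike.congr_fun hP y

theorem MetricPiProperty.exists_approx_mem_range {X : Type*} [NormedAddCommGroup X]
    [NormedSpace ℝ X] (hX : MetricPiProperty X) {δ : ℝ} (hδ : 0 < δ) {ι : Type*} (s : Finset ι)
    (x : ι → X) :
    ∃ P : X →L[ℝ] X, IsIdempotentElem P ∧ ‖P‖ = 1 ∧
      FiniteDimensional ℝ (LinearMap.range (P : X →ₗ[ℝ] X)) ∧
      ∃ x' : ι → X, (∀ i, x' i ∈ LinearMap.range (P : X →ₗ[ℝ] X)) ∧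
        ∀ i ∈ s, ‖x i - x' i‖ ≤ δ * ‖x i‖ := by
  classical
  obtain ⟨P, hP, hP1, hPfin, happrox⟩ :=
    hX δ hδ ((s.image fun i => ‖x i‖⁻¹ • x i).filter fun v => ‖v‖ = 1)
      fun v hv => (Finset.mem_filter.1 hv).2
  have : ∀ i, ∃ v ∈ LinearMap.range (P : X →ₗ[ℝ] X), i ∈ s → ‖x i - v‖ ≤ δ * ‖x i‖ := by
    intro i
    by_cases hi : i ∈ s ∧ x i ≠ 0
    · obtain ⟨v, hv, hxv⟩ := happrox (‖x i‖⁻¹ • x i) <|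
        Finset.mem_filter.2 ⟨Finset.mem_image_of_mem _ hi.1, norm_smul_inv_norm hi.2⟩
      refine ⟨‖x i‖ • v, Submodule.smul_mem _ _ hv, fun _ => ?_⟩
      have hnx : ‖x i‖ ≠ 0 := norm_ne_zero_iff.2 hi.2
      calc ‖x i - ‖x i‖ • v‖ = ‖‖x i‖ • (‖x i‖⁻¹ • x i - v)‖ := by
            rw [smul_sub, smul_inv_smul₀ hnx]
        _ = ‖x i‖ * ‖‖x i‖⁻¹ • x i - v‖ := by rw [norm_smul, norm_norm]
        _ ≤ δ * ‖x i‖ := by rw [mul_comm]; gcongr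
    · refine ⟨0, Submodule.zero_mem _, fun hs => ?_⟩
      simp [not_and_not_right.1 hi hs]
  choose x' hx' hxx' using this
  exact ⟨P, hP, hP1, hPfin, x', hx', hxx'⟩

section ProjectiveTensor

variable {X Y Z : Type*} [NormedAddCommGroup X] [NormedSpace ℝ X]
  [NormedAddCommGroup Y] [NormedSpace ℝ Y] [NormedAddCommGroup Z] [NormedSpace ℝ Z]

def tmulUnitBalls (t : X →L[ℝ] Y →L[ℝ] Z) (M : Submodule ℝ X) (N : Submodule ℝ Y) : Set Z :=
  (fun p : M × N => t p.1 p.2) '' (Metric.closedBall 0 1 ×ˢ Metric.closedBall 0 1)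

variable {t : X →L[ℝ] Y →L[ℝ] Z} {M : Submodule ℝ X} {N : Submodule ℝ Y}

theorem tmul_mem_tmulUnitBalls {m : X} {n : Y} (hm : m ∈ M) (hn : n ∈ N) (hm1 : ‖m‖ ≤ 1)
    (hn1 : ‖n‖ ≤ 1) : t m n ∈ tmulUnitBalls t M N :=
  ⟨(⟨m, hm⟩, ⟨n, hn⟩), ⟨mem_closedBall_zero_iff.2 hm1, mem_closedBall_zero_iff.2 hn1⟩, rfl⟩

theorem finiteDimensional_span_image2 [FiniteDimensional ℝ M] [FiniteDimensional ℝ N] :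
    FiniteDimensional ℝ (Submodule.span ℝ (image2 (fun m n => t m n) M N)) := by
  let B := TensorProduct.lift ((ContinuousLinearMap.toLinearMap₁₂ t).compl₁₂ M.subtype N.subtype)
  refine Submodule.finiteDimensional_of_le (S₂ := LinearMap.range B) (Submodule.span_le.2 ?_)
  rintro _ ⟨m, hm, n, hn, rfl⟩
  exact ⟨⟨m, hm⟩ ⊗ₜ ⟨n, hn⟩, by simp [B]⟩

theorem isCompact_convexHull_tmulUnitBalls [FiniteDimensional ℝ M] [FiniteDimensional ℝ N] :
    IsCompact (convexHull ℝ (tmulUnitBalls t M N)) := by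
  let W := Submodule.span ℝ (image2 (fun m n => t m n) M N)
  have : FiniteDimensional ℝ W := finiteDimensional_span_image2
  refine isCompact_convexHull_of_subset_submodule ?_ W ?_
  · exact ((isCompact_closedBall _ _).prod (isCompact_closedBall _ _)).image (by fun_prop)
  · rintro _ ⟨p, -, rfl⟩
    exact Submodule.subset_span (mem_image2_of_mem p.1.2 p.2.2)

variable {lift : (X →L[ℝ] (Y →L[ℝ] ℝ)) → (Z →L[ℝ] ℝ)} {P : X →L[ℝ] X} {Q : Y →L[ℝ] Y}

namespace IsProjTensorProduct

theorem norm_le_tsum (h : IsProjTensorProduct X Y Z t lift) {z : Z} {x : ℕ → X} {y : ℕ → Y}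
    (hs : Summable fun n => ‖x n‖ * ‖y n‖) (hz : HasSum (fun n => t (x n) (y n)) z) :
    ‖z‖ ≤ ∑' n, ‖x n‖ * ‖y n‖ := by
  rw [h.norm_eq_sInf z]
  refine csInf_le ⟨0, ?_⟩ ⟨x, y, hs, hz, rfl⟩
  rintro _ ⟨x, y, -, -, rfl⟩
  exact tsum_nonneg fun n => by positivity

theorem attainsProjNorm_sum_of_le (h : IsProjTensorProduct X Y Z t lift) {ι : Type*} [Fintype ι]
    (x : ι → X) (y : ι → Y) (hle : ∑ i, ‖x i‖ * ‖y i‖ ≤ ‖∑ i, t (x i) (y i)‖) :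
    AttainsProjNorm t (∑ i, t (x i) (y i)) := by
  obtain ⟨e, he⟩ : ∃ e : ι → ℕ, Function.Injective e :=
    ⟨_, Fin.val_injective.comp (Fintype.equivFin ι).injective⟩
  set xs : ℕ → X := Function.extend e x 0
  set ys : ℕ → Y := Function.extend e y 0
  have hxs_off : ∀ k ∉ range e, xs k = 0 := fun k hk =>
    (Function.extend_apply' _ _ _ fun ⟨i, hi⟩ => hk ⟨i, hi⟩)
  have hcost : HasSum (fun k => ‖xs k‖ * ‖ys k‖) (∑ i, ‖x i‖ * ‖y i‖) := by
    refine (he.hasSum_iff fun k hk => by simp [hxs_off k hk]).1 ?_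
    simpa [Function.comp_def, xs, ys, he.extend_apply] using hasSum_fintype _
  have hsum : HasSum (fun k => t (xs k) (ys k)) (∑ i, t (x i) (y i)) := by
    refine (he.hasSum_iff fun k hk => by simp [hxs_off k hk]).1 ?_
    simpa [Function.comp_def, xs, ys, he.extend_apply] using hasSum_fintype _
  exact ⟨xs, ys, hcost.summable, hsum,
    (h.norm_le_tsum hcost.summable hsum).antisymm (hcost.tsum_eq ▸ hle)⟩

theorem mem_convexHull_tmulUnitBalls (h : IsProjTensorProduct X Y Z t lift)
    (hP : IsIdempotentElem P) (hP1 : ‖P‖ ≤ 1) (hQ : IsIdempotentElem Q) (hQ1 : ‖Q‖ ≤ 1)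
    [FiniteDimensional ℝ (LinearMap.range (P : X →ₗ[ℝ] X))]
    [FiniteDimensional ℝ (LinearMap.range (Q : Y →ₗ[ℝ] Y))] {u : Z}
    (hu : u ∈ Submodule.span ℝ (image2 (fun m n => t m n)
      (LinearMap.range (P : X →ₗ[ℝ] X)) (LinearMap.range (Q : Y →ₗ[ℝ] Y))))
    (hu1 : ‖u‖ ≤ 1) :
    u ∈ convexHull ℝ (tmulUnitBalls t (LinearMap.range (P : X →ₗ[ℝ] X))
      (LinearMap.range (Q : Y →ₗ[ℝ] Y))) := by
  by_contra huK
  obtain ⟨f, c, hfK, hcu⟩ := geometric_hahn_banach_closed_point (convex_convexHull ℝ _)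
    isCompact_convexHull_tmulUnitBalls.isClosed huK
  have hA : ∀ x y, ‖x‖ ≤ 1 → ‖y‖ ≤ 1 → f (t (P x) (Q y)) < c := fun x y hx hy =>
    hfK _ <| subset_convexHull ℝ _ <| tmul_mem_tmulUnitBalls (LinearMap.mem_range_self _ x)
      (LinearMap.mem_range_self _ y) ((P.le_of_opNorm_le hP1 x).trans (by simpa using hx))
      ((Q.le_of_opNorm_le hQ1 y).trans (by simpa using hy))
  have hc : 0 ≤ c := by simpa using (hA 0 0 (by simp) (by simp)).le
  let G : X →L[ℝ] Y →L[ℝ] ℝ := ((ContinuousLinearMap.compL ℝ Y Y ℝ).flip Q).comp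
    ((ContinuousLinearMap.compL ℝ Y Z ℝ f).comp (t.comp P))
  -- `tmulUnitBalls` is symmetric, so `|G x y| < c` on the unit spheres
  have hG : ‖G‖ ≤ c := by
    refine G.opNorm_le_of_unit_norm hc fun x hx => ?_
    refine (G x).opNorm_le_of_unit_norm hc fun y hy => ?_
    have h1 := hA x y hx.le hy.le
    have h2 := hA (-x) y (by simpa using hx.le) hy.le
    simp only [map_neg, neg_apply] at h2
    exact (abs_lt.2 ⟨by linarith, h1⟩).le
  have hGu : lift G u = f u := by
    refine LinearMap.eqOn_span (f := (lift G : Z →ₗ[ℝ] ℝ)) (g := (f : Z →ₗ[ℝ] ℝ)) ?_ hu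
    rintro _ ⟨m, hm, n, hn, rfl⟩
    simp [G, h.lift_tmul, ContinuousLinearMap.IsIdempotentElem.apply_of_mem_range hP hm,
      ContinuousLinearMap.IsIdempotentElem.apply_of_mem_range hQ hn]
  have : f u ≤ c := calc
    f u = lift G u := hGu.symm
    _ ≤ ‖lift G‖ * ‖u‖ := (Real.le_norm_self _).trans ((lift G).le_opNorm u)
    _ ≤ c * 1 := by rw [h.norm_lift]; gcongr
    _ = c := mul_one c
  linarith

theorem attainsProjNorm_of_mem_span (h : IsProjTensorProduct X Y Z t lift)
    (hP : IsIdempotentElem P) (hP1 : ‖P‖ ≤ 1) (hQ : IsIdempotentElem Q) (hQ1 : ‖Q‖ ≤ 1)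
    [FiniteDimensional ℝ (LinearMap.range (P : X →ₗ[ℝ] X))]
    [FiniteDimensional ℝ (LinearMap.range (Q : Y →ₗ[ℝ] Y))] {w : Z}
    (hw : w ∈ Submodule.span ℝ (image2 (fun m n => t m n)
      (LinearMap.range (P : X →ₗ[ℝ] X)) (LinearMap.range (Q : Y →ₗ[ℝ] Y)))) :
    AttainsProjNorm t w := by
  rcases eq_or_ne w 0 with rfl | hw0
  · simpa using h.attainsProjNorm_sum_of_le (ι := Empty) Empty.elim Empty.elim (by simp)
  set c := ‖w‖
  have hc : 0 < c := norm_pos_iff.2 hw0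
  have hu := h.mem_convexHull_tmulUnitBalls hP hP1 hQ hQ1 (Submodule.smul_mem _ c⁻¹ hw)
    (by rw [norm_smul, norm_inv, norm_norm, inv_mul_cancel₀ hc.ne'])
  obtain ⟨ι, _, a, z, ha0, ha1, hzA, hz⟩ := mem_convexHull_iff_exists_fintype.1 hu
  choose p hp hpz using hzA
  have hw_eq : w = ∑ i, t ((c * a i) • ((p i).1 : X)) (p i).2 := by
    simp only [map_smul, smul_apply, mul_smul, ← Finset.smul_sum]
    rw [← smul_inv_smul₀ hc.ne' w, ← hz]
    simp [hpz]
  refine hw_eq ▸ h.attainsProjNorm_sum_of_le _ _ ?_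
  rw [← hw_eq]
  calc ∑ i, ‖(c * a i) • ((p i).1 : X)‖ * ‖((p i).2 : Y)‖
      = ∑ i, c * a i * (‖(p i).1‖ * ‖(p i).2‖) := by
        simp [norm_smul, abs_of_nonneg (ha0 _), abs_of_pos hc, mul_assoc]
    _ ≤ ∑ i, c * a i := Finset.sum_le_sum fun i _ =>
        mul_le_of_le_one_right (mul_nonneg hc.le (ha0 i)) <| mul_le_one₀
          (mem_closedBall_zero_iff.1 (hp i).1) (norm_nonneg _) (mem_closedBall_zero_iff.1 (hp i).2)
    _ = c := by rw [← Finset.mul_sum, ha1, mul_one]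

theorem norm_tmul_sub_tmul_le (h : IsProjTensorProduct X Y Z t lift) {x x' : X} {y y' : Y}
    {δ : ℝ} (hδ1 : δ ≤ 1) (hx : ‖x - x'‖ ≤ δ * ‖x‖) (hy : ‖y - y'‖ ≤ δ * ‖y‖) :
    ‖t x y - t x' y'‖ ≤ 3 * δ * (‖x‖ * ‖y‖) := by
  have hx' : ‖x'‖ ≤ 2 * ‖x‖ := by
    linarith [norm_sub_norm_le x' x, norm_sub_rev x' x, mul_le_of_le_one_left (norm_nonneg x) hδ1]
  calc ‖t x y - t x' y'‖ = ‖t (x - x') y + t x' (y - y')‖ := by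
        simp only [map_sub, sub_apply]; abel_nf
    _ ≤ ‖x - x'‖ * ‖y‖ + ‖x'‖ * ‖y - y'‖ :=
        norm_add_le_of_le (h.norm_tmul_le _ _) (h.norm_tmul_le _ _)
    _ ≤ δ * ‖x‖ * ‖y‖ + 2 * ‖x‖ * (δ * ‖y‖) := by gcongr
    _ = 3 * δ * (‖x‖ * ‖y‖) := by ring

theorem exists_attainsProjNorm_near_sum (h : IsProjTensorProduct X Y Z t lift)
    (hX : MetricPiProperty X) (hY : MetricPiProperty Y) {ι : Type*} (s : Finset ι)
    (x : ι → X) (y : ι → Y) {ε : ℝ} (hε : 0 < ε) :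
    ∃ z', AttainsProjNorm t z' ∧ ‖∑ i ∈ s, t (x i) (y i) - z'‖ < ε := by
  set S := ∑ i ∈ s, ‖x i‖ * ‖y i‖
  have hS : 0 ≤ S := Finset.sum_nonneg fun i _ => by positivity
  set δ := min 1 (ε / (3 * S + 1))
  have hδ : 0 < δ := lt_min one_pos (by positivity)
  have hδS : 3 * δ * S < ε := by
    have : δ * (3 * S + 1) ≤ ε :=
      (mul_le_mul_of_nonneg_right (min_le_right _ _) (by positivity)).trans_eq
        (div_mul_cancel₀ _ (by positivity))
    nlinarith
  obtain ⟨P, hP, hP1, _, x', hx', hxx'⟩ := hX.exists_approx_mem_range hδ s x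
  obtain ⟨Q, hQ, hQ1, _, y', hy', hyy'⟩ := hY.exists_approx_mem_range hδ s y
  refine ⟨∑ i ∈ s, t (x' i) (y' i), h.attainsProjNorm_of_mem_span hP hP1.le hQ hQ1.le <|
    Submodule.sum_mem _ fun i _ => Submodule.subset_span (mem_image2_of_mem (hx' i) (hy' i)), ?_⟩
  calc ‖∑ i ∈ s, t (x i) (y i) - ∑ i ∈ s, t (x' i) (y' i)‖
      ≤ ∑ i ∈ s, ‖t (x i) (y i) - t (x' i) (y' i)‖ := by
        rw [← Finset.sum_sub_distrib]; exact norm_sum_le _ _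
    _ ≤ ∑ i ∈ s, 3 * δ * (‖x i‖ * ‖y i‖) := Finset.sum_le_sum fun i hi =>
        h.norm_tmul_sub_tmul_le (min_le_left _ _) (hxx' i hi) (hyy' i hi)
    _ = 3 * δ * S := (Finset.mul_sum _ _ _).symm
    _ < ε := hδS

end IsProjTensorProduct

end ProjectiveTensor

theorem tensor_normAttaining_dense_of_metricPi_metricPi_general
    {X Y Z : Type*} [NormedAddCommGroup X] [NormedSpace ℝ X]
    [NormedAddCommGroup Y] [NormedSpace ℝ Y]
    [NormedAddCommGroup Z] [NormedSpace ℝ Z]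
    (t : X →L[ℝ] Y →L[ℝ] Z) (lift : (X →L[ℝ] (Y →L[ℝ] ℝ)) → (Z →L[ℝ] ℝ))
    (h : IsProjTensorProduct X Y Z t lift)
    (hX : MetricPiProperty X) (hY : MetricPiProperty Y) :
    Dense {z : Z | AttainsProjNorm t z} := by
  refine fun z => Metric.mem_closure_iff.2 fun ε hε => ?_
  obtain ⟨x, y, -, hz⟩ := h.exists_rep z
  obtain ⟨k, hk⟩ := Metric.tendsto_atTop.1 hz.tendsto_sum_nat (ε / 2) (half_pos hε)
  obtain ⟨z', hz', hzz'⟩ :=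
    h.exists_attainsProjNorm_near_sum hX hY (Finset.range k) x y (half_pos hε)
  refine ⟨z', hz', ?_⟩
  calc dist z z' ≤ dist (∑ i ∈ Finset.range k, t (x i) (y i)) z +
        dist (∑ i ∈ Finset.range k, t (x i) (y i)) z' := dist_triangle_left _ _ _
    _ < ε / 2 + ε / 2 := add_lt_add (hk k le_rfl) (by rwa [dist_eq_norm])
    _ = ε := add_halves ε

/-- If `X` and `Y` both satisfy the metric π-property, then the set of
norm-attaining tensors is dense in `X ⊗π Y`. -/
theorem tensor_normAttaining_dense_of_metricPi_metricPi
    {X Y Z : Type*} [NormedAddCommGroup X] [NormedSpace ℝ X] [CompleteSpace X]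
    [NormedAddCommGroup Y] [NormedSpace ℝ Y] [CompleteSpace Y]
    [NormedAddCommGroup Z] [NormedSpace ℝ Z] [CompleteSpace Z]
    (t : X →L[ℝ] Y →L[ℝ] Z) (lift : (X →L[ℝ] (Y →L[ℝ] ℝ)) → (Z →L[ℝ] ℝ))
    (h : IsProjTensorProduct X Y Z t lift)
    (hX : MetricPiProperty X) (hY : MetricPiProperty Y) :
    Dense {z : Z | AttainsProjNorm t z} :=
  tensor_normAttaining_dense_of_metricPi_metricPi_general t lift h hX hY
end
end
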